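/- arXiv:1905.07532 — 2 statements merged into one kernel-verified Lean document; each statement's English description precedes it below -/
import Mathlib

section
/- (Gale–Ryser) Given nonnegative integer vectors h in N^T and r in N^N with ||h||_1 = ||r||_1, there exists an N×T matrix A with entries in {0,1} whose n-th row sums to r_n for each n and whose j-th column sums to h_j for each j, if and only if h is majorized by r*, the partition conjugate of r. -/
/-!
Necessity is double counting: any `k` columns of a (0,1)-matrix contain at most
`∑ n, min (r n) k` ones, and this is the sum of the first `k` entries of `r*`.

For sufficiency, the Ferrers diagram of `r` realizes `r*`. Moving a one inside a row from a column
with larger sum to one with smaller sum keeps the matrix a (0,1)-matrix, and every `h ≺ r*` is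
reached from `r*` by permutations and such transfers: with both vectors sorted decreasingly, move
one unit from the first index where they differ to the first index where `h` is larger. This
preserves majorization and strictly decreases the sum of squares.
-/

/-- Sum of the `k` largest entries of `x` (padding with zeros if `k` exceeds the length). -/
def topSum {N : ℕ} (x : Fin N → ℕ) (k : ℕ) : ℕ :=
  (Finset.univ.powerset.filter (fun S : Finset (Fin N) => S.card ≤ k)).sup
    (fun S => ∑ i ∈ S, x i)

open Finset

lemma sum_le_sum_of_card_le_of_forall_le {β : Type*} {s t : Finset β} {f : β → ℕ}
    (hst : #s ≤ #t) (h : ∀ a ∈ s, ∀ b ∈ t, f a ≤ f b) : ∑ a ∈ s, f a ≤ ∑ b ∈ t, f b :=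
  calc ∑ a ∈ s, f a ≤ #s • s.sup f := sum_le_card_nsmul s f _ fun _ ha => le_sup ha
    _ ≤ #t • s.sup f := nsmul_le_nsmul_left (Nat.zero_le _) hst
    _ ≤ ∑ b ∈ t, f b :=
      card_nsmul_le_sum t f _ fun b hb => Finset.sup_le fun a ha => h a ha b hb

section Transfer

variable {α : Type*} [DecidableEq α]

def transfer (g : α → ℕ) (i j : α) : α → ℕ := g - Pi.single i 1 + Pi.single j 1

lemma transfer_add_single {g : α → ℕ} {i : α} (hi : 1 ≤ g i) (j : α) :
    transfer g i j + Pi.single i 1 = g + Pi.single j 1 := by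
  ext l
  by_cases hl : l = i
  · subst hl
    simp only [transfer, Pi.add_apply, Pi.sub_apply, Pi.single_eq_same]
    omega
  · simp [transfer, hl]

lemma eq_transfer_of_add_single {f g : α → ℕ} {i j : α} (hi : 1 ≤ g i)
    (h : f + Pi.single i 1 = g + Pi.single j 1) : f = transfer g i j :=
  add_right_cancel (h.trans (transfer_add_single hi j).symm)

lemma sum_transfer_add {g : α → ℕ} {i : α} (hi : 1 ≤ g i) (j : α) (s : Finset α) :
    ∑ l ∈ s, transfer g i j l + (if i ∈ s then 1 else 0) =
      ∑ l ∈ s, g l + (if j ∈ s then 1 else 0) := by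
  simpa [sum_add_distrib] using congrArg (fun f => ∑ l ∈ s, f l) (transfer_add_single hi j)

lemma sum_transfer [Fintype α] {g : α → ℕ} {i : α} (hi : 1 ≤ g i) (j : α) :
    ∑ l, transfer g i j l = ∑ l, g l := by
  simpa using sum_transfer_add hi j univ

lemma transfer_apply_of_ne {g : α → ℕ} {i j l : α} (hi : l ≠ i) (hj : l ≠ j) :
    transfer g i j l = g l := by
  simp [transfer, hi, hj]

lemma sum_sq_transfer_lt [Fintype α] {g : α → ℕ} {i j : α} (h : g j + 1 < g i) :
    ∑ l, transfer g i j l ^ 2 < ∑ l, g l ^ 2 := by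
  have hij : i ≠ j := by rintro rfl; omega
  have hoff : ∑ l ∈ {i, j}ᶜ, transfer g i j l ^ 2 = ∑ l ∈ {i, j}ᶜ, g l ^ 2 :=
    sum_congr rfl fun l hl => by
      simp only [mem_compl, mem_insert, mem_singleton, not_or] at hl
      rw [transfer_apply_of_ne hl.1 hl.2]
  have hi : transfer g i j i = g i - 1 := by simp [transfer, hij]
  have hj : transfer g i j j = g j + 1 := by simp [transfer, hij.symm]
  rw [← sum_add_sum_compl {i, j}, ← sum_add_sum_compl {i, j} (fun l => g l ^ 2), hoff,
    sum_pair hij, sum_pair hij, hi, hj]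
  obtain ⟨a, ha⟩ : ∃ a, g i = a + 1 := ⟨g i - 1, by omega⟩
  rw [ha, Nat.add_sub_cancel]
  nlinarith

end Transfer

section Realizable

variable {ι κ : Type*} [Fintype ι] [Fintype κ]

def ZeroOneRealizable (r : ι → ℕ) (c : κ → ℕ) : Prop :=
  ∃ A : ι → κ → ℕ, (∀ n j, A n j ≤ 1) ∧ (∀ n, ∑ j, A n j = r n) ∧ (∀ j, ∑ n, A n j = c j)

namespace ZeroOneRealizable

variable {r : ι → ℕ} {c : κ → ℕ}

lemma sum_eq (hc : ZeroOneRealizable r c) : ∑ j, c j = ∑ n, r n := by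
  obtain ⟨A, -, hrow, hcol⟩ := hc
  simp_rw [← hrow, ← hcol]
  exact sum_comm

lemma sum_le_sum_min (hc : ZeroOneRealizable r c) {S : Finset κ} {k : ℕ} (hS : #S ≤ k) :
    ∑ j ∈ S, c j ≤ ∑ n, min (r n) k := by
  obtain ⟨A, hA, hrow, hcol⟩ := hc
  calc ∑ j ∈ S, c j = ∑ n, ∑ j ∈ S, A n j := by simp_rw [← hcol]; exact sum_comm
    _ ≤ ∑ n, min (r n) k := sum_le_sum fun n _ => le_min
        (hrow n ▸ sum_le_sum_of_subset (subset_univ S))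
        ((sum_le_card_nsmul S _ 1 fun j _ => hA n j).trans (by simpa using hS))

lemma comp_perm (hc : ZeroOneRealizable r c) (σ : Equiv.Perm κ) :
    ZeroOneRealizable r (c ∘ σ) := by
  obtain ⟨A, hA, hrow, hcol⟩ := hc
  exact ⟨fun n j => A n (σ j), fun n j => hA n (σ j),
    fun n => (Equiv.sum_comp σ (A n)).trans (hrow n), fun j => hcol (σ j)⟩

/-- Since `c j < c i`, some row has a one in column `i` and a zero in column `j`;
swapping these two entries moves one unit of column sum from `i` to `j`. -/
lemma transfer [DecidableEq κ] (hc : ZeroOneRealizable r c) {i j : κ} (hij : c j < c i) :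
    ZeroOneRealizable r (transfer c i j) := by
  classical
  obtain ⟨A, hA, hrow, hcol⟩ := hc
  obtain ⟨n₀, hi, hj⟩ : ∃ n₀, A n₀ i = 1 ∧ A n₀ j = 0 := by
    by_contra! hcon
    refine hij.not_ge (hcol i ▸ hcol j ▸ sum_le_sum fun n _ => ?_)
    have := hA n i; have := hA n j; have := hcon n
    omega
  have hi₁ : 1 ≤ A n₀ i := hi.ge
  set row := _root_.transfer (A n₀) i j
  have hrow₀ : row + Pi.single i 1 = A n₀ + Pi.single j 1 := transfer_add_single hi₁ j
  have hcolfun : ∑ n, A n = c := funext fun l => by simp [Finset.sum_apply, hcol]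
  refine ⟨Function.update A n₀ row, fun n l => ?_, fun n => ?_, fun l => ?_⟩
  · by_cases hn : n = n₀
    · subst hn
      have hl := congrFun hrow₀ l
      have := hA n l
      simp only [Function.update_self, Pi.add_apply, Pi.single_apply] at hl ⊢
      split_ifs at hl <;> subst_vars <;> omega
    · simpa [hn] using hA n l
  · by_cases hn : n = n₀
    · subst hn
      simpa [row, hrow] using sum_transfer hi₁ j
    · simpa [hn] using hrow n
  · suffices ∑ n, Function.update A n₀ row n = _root_.transfer c i j by
      simpa [Finset.sum_apply] using congrFun this l
    refine eq_transfer_of_add_single (by omega) (add_right_cancel (b := A n₀) ?_)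
    rw [← hcolfun, sum_update_of_mem (mem_univ n₀),
      sum_eq_add_sum_sdiff_singleton_of_mem (mem_univ n₀)]
    calc row + _ + Pi.single i 1 + A n₀
        = (row + Pi.single i 1) + (A n₀ + ∑ n ∈ univ \ {n₀}, A n) := by abel
      _ = _ := by rw [hrow₀]; abel

end ZeroOneRealizable

end Realizable

section Majorization

variable {T : ℕ}

def prefixSum (x : Fin T → ℕ) (k : ℕ) : ℕ :=
  ∑ j ∈ univ.filter (fun j : Fin T => (j : ℕ) < k), x j

lemma sum_le_topSum (x : Fin T → ℕ) {S : Finset (Fin T)} {k : ℕ} (hS : #S ≤ k) :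
    ∑ i ∈ S, x i ≤ topSum x k :=
  le_sup (f := fun S => ∑ i ∈ S, x i) (by simp [hS])

lemma topSum_le_iff {x : Fin T → ℕ} {k c : ℕ} :
    topSum x k ≤ c ↔ ∀ S : Finset (Fin T), #S ≤ k → ∑ i ∈ S, x i ≤ c := by
  simp [topSum]

lemma topSum_comp_perm_le (x : Fin T → ℕ) (σ : Equiv.Perm (Fin T)) (k : ℕ) :
    topSum (x ∘ σ) k ≤ topSum x k :=
  topSum_le_iff.2 fun S hS =>
    calc ∑ i ∈ S, x (σ i) = ∑ i ∈ S.map σ.toEmbedding, x i :=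
          (sum_map S σ.toEmbedding x).symm
      _ ≤ topSum x k := sum_le_topSum x (by simpa using hS)

lemma topSum_comp_perm (x : Fin T → ℕ) (σ : Equiv.Perm (Fin T)) (k : ℕ) :
    topSum (x ∘ σ) k = topSum x k := by
  refine (topSum_comp_perm_le x σ k).antisymm ?_
  simpa [Function.comp_assoc] using topSum_comp_perm_le (x ∘ σ) σ.symm k

lemma prefixSum_le_topSum (x : Fin T → ℕ) (k : ℕ) : prefixSum x k ≤ topSum x k :=
  sum_le_topSum x (by simp [Fin.card_filter_val_lt])

lemma prefixSum_transfer_add {g : Fin T → ℕ} {i : Fin T} (hi : 1 ≤ g i) (j : Fin T) (k : ℕ) :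
    prefixSum (transfer g i j) k + (if (i : ℕ) < k then 1 else 0) =
      prefixSum g k + (if (j : ℕ) < k then 1 else 0) := by
  simpa [prefixSum] using sum_transfer_add hi j (univ.filter fun l : Fin T => (l : ℕ) < k)

lemma sum_le_prefixSum {x : Fin T → ℕ} (hx : Antitone x) {S : Finset (Fin T)} {k : ℕ}
    (hS : #S ≤ k) : ∑ i ∈ S, x i ≤ prefixSum x k := by
  set P := univ.filter (fun j : Fin T => (j : ℕ) < k)
  have hSP : #S ≤ #P := by
    simpa [P, Fin.card_filter_val_lt] using ⟨card_le_univ S |>.trans (by simp), hS⟩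
  rw [prefixSum, ← sum_inter_add_sum_sdiff S P, ← sum_inter_add_sum_sdiff P S, inter_comm]
  refine add_le_add_right (sum_le_sum_of_card_le_of_forall_le
    (card_sdiff_le_card_sdiff_iff.2 hSP) fun a ha b hb => hx ?_) _
  simp only [P, mem_sdiff, mem_filter, mem_univ, true_and] at ha hb
  exact Fin.le_def.2 (by omega)

lemma topSum_eq_prefixSum {x : Fin T → ℕ} (hx : Antitone x) (k : ℕ) :
    topSum x k = prefixSum x k :=
  (topSum_le_iff.2 fun _ => sum_le_prefixSum hx).antisymm (prefixSum_le_topSum x k)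

lemma exists_perm_antitone (x : Fin T → ℕ) : ∃ σ : Equiv.Perm (Fin T), Antitone (x ∘ σ) :=
  ⟨Fin.revPerm.trans (Tuple.sort x), fun _ _ hij => Tuple.monotone_sort x (Fin.rev_le_rev.2 hij)⟩

lemma exists_lt_of_prefixSum_le {x z : Fin T → ℕ} (hne : x ≠ z)
    (hle : ∀ k, prefixSum x k ≤ prefixSum z k) : ∃ p, x p < z p ∧ ∀ l < p, x l = z l := by
  obtain ⟨p, hp, hpmin⟩ := wellFounded_lt.has_min {l | x l ≠ z l} (Function.ne_iff.mp hne)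
  have hbelow_p : ∀ l < p, x l = z l := fun l hl => not_not.mp fun h => hpmin l h hl
  refine ⟨p, (Ne.lt_or_gt hp).resolve_right fun hzx => (hle (p + 1)).not_gt ?_, hbelow_p⟩
  refine sum_lt_sum (fun l hl => ?_) ⟨p, by simp, hzx⟩
  simp only [mem_filter, mem_univ, true_and] at hl
  rcases (Nat.lt_succ_iff.1 hl).lt_or_eq with h | h
  · exact (hbelow_p l h).ge
  · rw [Fin.ext h]
    exact hzx.le

lemma exists_transfer_of_prefixSum_le {x z : Fin T → ℕ} (hx : Antitone x) (hne : x ≠ z)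
    (hsum : ∑ j, x j = ∑ j, z j) (hle : ∀ k, prefixSum x k ≤ prefixSum z k) :
    ∃ p q, z q + 1 < z p ∧ ∀ k, prefixSum x k ≤ prefixSum (transfer z p q) k := by
  obtain ⟨p, hxp, hbelow_p⟩ := exists_lt_of_prefixSum_le hne hle
  have hq_ne : ∃ q, z q < x q := by
    by_contra! hcon
    exact hsum.not_lt (sum_lt_sum (fun l _ => hcon l) ⟨p, mem_univ p, hxp⟩)
  obtain ⟨q, hq, hqmin⟩ := wellFounded_lt.has_min {l | z l < x l} hq_ne
  have hbelow_q : ∀ l < q, x l ≤ z l := fun l hl => not_lt.mp fun h => hqmin l h hl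
  have hzxq : z q < x q := hq
  have hpq : p < q := by
    refine lt_of_not_ge fun hqp => ?_
    rcases hqp.lt_or_eq with h | rfl
    · exact hzxq.ne' (hbelow_p q h)
    · exact hzxq.not_gt hxp
  have hxqp : x q ≤ x p := hx hpq.le
  refine ⟨p, q, by omega, fun k => ?_⟩
  have key := prefixSum_transfer_add (g := z) (i := p) (by omega) q k
  have := hle k
  by_cases hstrict : (p : ℕ) < k ∧ ¬(q : ℕ) < k
  · have hlt : prefixSum x k < prefixSum z k := by
      refine sum_lt_sum (fun l hl => hbelow_q l ?_) ⟨p, by simp [hstrict.1], hxp⟩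
      simp only [mem_filter, mem_univ, true_and] at hl
      exact Fin.lt_def.2 (by omega)
    rw [if_pos hstrict.1, if_neg hstrict.2] at key
    omega
  · have : (p : ℕ) < (q : ℕ) := hpq
    split_ifs at key <;> omega

theorem majorization_induction_of_antitone {P : (Fin T → ℕ) → Prop}
    (hperm : ∀ g (σ : Equiv.Perm (Fin T)), P g → P (g ∘ σ))
    (htransfer : ∀ g i j, g j + 1 < g i → P g → P (transfer g i j))
    {x : Fin T → ℕ} (hx : Antitone x) (y : Fin T → ℕ) (hy : P y) (hsum : ∑ j, x j = ∑ j, y j)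
    (hmaj : ∀ k, topSum x k ≤ topSum y k) : P x := by
  induction hn : ∑ l, y l ^ 2 using Nat.strong_induction_on generalizing y with
  | _ n ih =>
    obtain ⟨σ, hσ⟩ := exists_perm_antitone y
    set z := y ∘ σ
    have hz : P z := hperm y σ hy
    by_cases hxz : x = z
    · exact hxz ▸ hz
    have hzsum : ∑ j, z j = ∑ j, y j := Equiv.sum_comp σ y
    have hle : ∀ k, prefixSum x k ≤ prefixSum z k := fun k => by
      rw [← topSum_eq_prefixSum hx, ← topSum_eq_prefixSum hσ, topSum_comp_perm]
      exact hmaj k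
    obtain ⟨p, q, hpq, hle'⟩ := exists_transfer_of_prefixSum_le hx hxz (hsum.trans hzsum.symm) hle
    refine ih _ ?_ _ (htransfer z p q hpq hz) ?_ (fun k => ?_) rfl
    · rw [← hn, ← Equiv.sum_comp σ (fun l => y l ^ 2)]
      exact sum_sq_transfer_lt hpq
    · rw [sum_transfer (by omega), hzsum, hsum]
    · rw [topSum_eq_prefixSum hx]
      exact (hle' k).trans (prefixSum_le_topSum _ k)

theorem majorization_induction {P : (Fin T → ℕ) → Prop}
    (hperm : ∀ g (σ : Equiv.Perm (Fin T)), P g → P (g ∘ σ))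
    (htransfer : ∀ g i j, g j + 1 < g i → P g → P (transfer g i j))
    {x y : Fin T → ℕ} (hy : P y) (hsum : ∑ j, x j = ∑ j, y j)
    (hmaj : ∀ k, topSum x k ≤ topSum y k) : P x := by
  obtain ⟨σ, hσ⟩ := exists_perm_antitone x
  have hxσ : P (x ∘ σ) := majorization_induction_of_antitone hperm htransfer hσ y hy
    ((Equiv.sum_comp σ x).trans hsum) fun k => (topSum_comp_perm x σ k).trans_le (hmaj k)
  simpa [Function.comp_assoc] using hperm _ σ.symm hxσ

end Majorization

section Conjugate

variable {ι : Type*} [Fintype ι]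

def conjugate (T : ℕ) (r : ι → ℕ) : Fin T → ℕ := fun j => #{n | (j : ℕ) + 1 ≤ r n}

lemma zeroOneRealizable_conjugate {T : ℕ} {r : ι → ℕ} (hr : ∀ n, r n ≤ T) :
    ZeroOneRealizable r (conjugate T r) := by
  refine ⟨fun n j => if (j : ℕ) < r n then 1 else 0,
    fun n j => by dsimp only; split_ifs <;> omega, fun n => ?_, fun j => ?_⟩
  · simp [sum_boole, Fin.card_filter_val_lt, hr n]
  · rw [sum_boole]
    rfl

lemma prefixSum_conjugate {T : ℕ} {r : ι → ℕ} (hr : ∀ n, r n ≤ T) (k : ℕ) :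
    prefixSum (conjugate T r) k = ∑ n, min (r n) k := by
  simp only [prefixSum, conjugate, card_filter]
  rw [sum_comm]
  refine sum_congr rfl fun n _ => ?_
  rw [← card_filter, filter_filter]
  have hfilter : ∀ a : Fin T, (a : ℕ) < k ∧ (a : ℕ) + 1 ≤ r n ↔ (a : ℕ) < min (r n) k :=
    fun a => by omega
  simp_rw [hfilter, Fin.card_filter_val_lt]
  have := hr n
  omega

end Conjugate

/-- Gale–Ryser: a (0,1)-matrix with row sums `r` and column sums `h` exists iff
`h` is majorized by the partition conjugate of `r`. -/
theorem gale_ryser (N T : ℕ) (h : Fin T → ℕ) (r : Fin N → ℕ)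
    (hrT : ∀ n, r n ≤ T) (hsum : ∑ j, h j = ∑ n, r n) :
    (∃ A : Fin N → Fin T → ℕ,
        (∀ n j, A n j ≤ 1) ∧
        (∀ n, ∑ j, A n j = r n) ∧
        (∀ j, ∑ n, A n j = h j)) ↔
      (∀ k, topSum h k ≤
        topSum (fun j : Fin T =>
          (Finset.univ.filter (fun n : Fin N => (j : ℕ) + 1 ≤ r n)).card) k) := by
  change ZeroOneRealizable r h ↔ ∀ k, topSum h k ≤ topSum (conjugate T r) k
  have hconj := zeroOneRealizable_conjugate hrT
  refine ⟨fun hh k => ?_, fun hmaj => ?_⟩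
  · refine topSum_le_iff.2 fun S hS => (hh.sum_le_sum_min hS).trans ?_
    exact (prefixSum_conjugate hrT k).ge.trans (prefixSum_le_topSum _ k)
  · exact majorization_induction (fun _ σ hg => hg.comp_perm σ)
      (fun _ _ _ hij hg => hg.transfer (by omega)) hconj (hsum.trans hconj.sum_eq.symm) hmaj
end

section
/- (Rate-constrained adequacy, uniform service time) Let h in N^T sorted in non-increasing order, r in N^N, r̄ in N^N with r̄_n ≥ 1. There exists an N×T matrix A with integer entries satisfying 0 ≤ A(n,j) ≤ r̄_n, row sums equal to r_n, and column sums at most h_j, if and only if for every k = 0, 1, ..., T: Σ_{j=k+1}^T h_j ≥ Σ_{n=1}^N [r_n − r̄_n·k]^+. -/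
/-!
Necessity: row `n` puts at most `rbar n * k` units into the first `k` columns, so at least
`[r n - rbar n * k]⁺` (truncated subtraction in `ℕ`) of them lie in the columns `≥ k`.

Sufficiency: the front-loaded matrix, whose row `n` is filled at rate `rbar n` from the left, has
exactly these tail column sums, so it satisfies every tail inequality but may overload columns.
If column `j` is the last overloaded one, the tail inequality at `j` forces a column `j' > j`
with slack, and all tail inequalities between `j` and `j'` are strict. Since `h` is
non-increasing, column `j` holds more than column `j'`, so some row has more in `j` than in `j'`
and can move one unit from `j` to `j'`: row sums, caps and tail inequalities survive and the
total overload drops. A matrix of minimal overload is therefore feasible.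
-/

open Finset

def tailSum {M : Type*} [AddCommMonoid M] {T : ℕ} (f : Fin T → M) (k : ℕ) : M :=
  ∑ j ∈ univ.filter (fun j : Fin T => k ≤ (j : ℕ)), f j

section TailSum

variable {M : Type*} [AddCommMonoid M] {T : ℕ}

theorem tailSum_zero (f : Fin T → M) : tailSum f 0 = ∑ j, f j := by
  simp [tailSum]

theorem tailSum_of_le (f : Fin T → M) {k : ℕ} (hk : T ≤ k) : tailSum f k = 0 :=
  sum_eq_zero fun j hj => absurd (mem_filter.1 hj).2 (by omega)

theorem tailSum_eq_add (f : Fin T → M) {k : ℕ} (hk : k < T) :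
    tailSum f k = f ⟨k, hk⟩ + tailSum f (k + 1) := by
  have : univ.filter (fun j : Fin T => k ≤ (j : ℕ)) =
      insert ⟨k, hk⟩ (univ.filter fun j : Fin T => k + 1 ≤ (j : ℕ)) := by
    ext j
    simp only [mem_filter, mem_univ, true_and, Order.add_one_le_iff, mem_insert, Fin.ext_iff]
    omega
  rw [tailSum, this, sum_insert (by simp)]
  rfl

theorem tailSum_add (f g : Fin T → M) (k : ℕ) : tailSum (f + g) k = tailSum f k + tailSum g k :=
  sum_add_distrib

theorem tailSum_sum {ι : Type*} (s : Finset ι) (A : ι → Fin T → M) (k : ℕ) :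
    tailSum (∑ n ∈ s, A n) k = ∑ n ∈ s, tailSum (A n) k := by
  simp only [tailSum, Finset.sum_apply]
  exact sum_comm

theorem tailSum_single (x : Fin T) (a : M) (k : ℕ) :
    tailSum (Pi.single x a) k = if k ≤ (x : ℕ) then a else 0 := by
  simp [tailSum, sum_pi_single']

theorem tailSum_mono [PartialOrder M] [IsOrderedAddMonoid M] {f g : Fin T → M} (hfg : f ≤ g)
    (k : ℕ) : tailSum f k ≤ tailSum g k :=
  sum_le_sum fun j _ => hfg j

end TailSum

theorem sum_sub_mul_le_tailSum {T b : ℕ} {a : Fin T → ℕ} (ha : ∀ j, a j ≤ b) (k : ℕ) :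
    (∑ j, a j) - b * k ≤ tailSum a k := by
  induction k with
  | zero => simp [tailSum_zero]
  | succ k ih =>
    rcases lt_or_ge k T with hk | hk
    · have := tailSum_eq_add a hk
      have := ha ⟨k, hk⟩
      rw [mul_add_one]
      omega
    · rw [tailSum_of_le a hk] at ih
      rw [mul_add_one]
      omega

def frontLoaded {T : ℕ} (b R : ℕ) (j : Fin T) : ℕ :=
  min b (R - b * j)

theorem tailSum_frontLoaded {T b R : ℕ} (hR : R ≤ b * T) (k : ℕ) :
    tailSum (frontLoaded (T := T) b R) k = R - b * k := by
  have htop : ∀ k, T ≤ k → tailSum (frontLoaded (T := T) b R) k = R - b * k := fun k hk => by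
    rw [tailSum_of_le _ hk]
    have := Nat.mul_le_mul_left b hk
    omega
  rcases le_total T k with hk | hk
  · exact htop k hk
  induction hk using Nat.decreasingInduction with
  | self => exact htop T le_rfl
  | of_succ k hk ih =>
    rw [tailSum_eq_add _ hk, ih, frontLoaded, Fin.val_mk, mul_add_one]
    omega

def excess {T : ℕ} (c h : Fin T → ℕ) : ℕ :=
  ∑ x, (c x - h x)

theorem exists_overloaded_slack {T : ℕ} {c h : Fin T → ℕ}
    (htail : ∀ k, tailSum c k ≤ tailSum h k) (hover : ∃ j, h j < c j) :
    ∃ j j' : Fin T, j < j' ∧ h j < c j ∧ c j' < h j' ∧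
      ∀ k : ℕ, (j : ℕ) < k → k ≤ j' → tailSum c k < tailSum h k := by
  obtain ⟨j, hj, hjmax⟩ := (univ.filter fun j => h j < c j).exists_max_image id
    (by simpa [Finset.Nonempty] using hover)
  simp only [mem_filter, mem_univ, true_and, id] at hj hjmax
  have hfit : ∀ x, j < x → c x ≤ h x := fun x hx =>
    not_lt.1 fun h' => by have := hjmax x h'; rw [Fin.lt_def] at hx; omega
  obtain ⟨j', hjj', hj'⟩ : ∃ j', j < j' ∧ c j' < h j' := by
    by_contra! hno
    have hge : tailSum h (j + 1) ≤ tailSum c (j + 1) :=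
      sum_le_sum fun x hx => hno x (Fin.lt_def.2 (by have := (mem_filter.1 hx).2; omega))
    have := htail j
    rw [tailSum_eq_add c j.isLt, tailSum_eq_add h j.isLt] at this
    simp only [Fin.eta] at this
    omega
  refine ⟨j, j', hjj', hj, hj', fun k hjk hkj' => sum_lt_sum (fun x hx => hfit x ?_) ⟨j', ?_, hj'⟩⟩
  · have := (mem_filter.1 hx).2
    rw [Fin.lt_def]
    omega
  · simpa using hkj'

section Exchange

variable {ι : Type*} [Fintype ι] [DecidableEq ι] {T : ℕ}

theorem sum_add_single_single (B : ι → Fin T → ℕ) (n : ι) (x : Fin T) :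
    ∑ m, (B + (Pi.single n (Pi.single x 1) : ι → Fin T → ℕ)) m = ∑ m, B m + Pi.single x 1 := by
  simp only [Pi.add_apply, sum_add_distrib, Fintype.sum_pi_single']

omit [Fintype ι] in
theorem sum_add_single_single_apply (B : ι → Fin T → ℕ) (n : ι) (x : Fin T) (m : ι) :
    ∑ y, (B + (Pi.single n (Pi.single x 1) : ι → Fin T → ℕ)) m y =
      ∑ y, B m y + if m = n then 1 else 0 := by
  rcases eq_or_ne m n with rfl | hm <;> simp [sum_add_distrib, *]

omit [Fintype ι] in
theorem single_single_apply (n : ι) (x : Fin T) (m : ι) (y : Fin T) :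
    (Pi.single n (Pi.single x 1) : ι → Fin T → ℕ) m y = if m = n ∧ y = x then 1 else 0 := by
  rcases eq_or_ne m n with rfl | hm <;> simp [Pi.single_apply, *]

omit [Fintype ι] in
theorem add_single_single_apply (B : ι → Fin T → ℕ) (n : ι) (x : Fin T) (m : ι) (y : Fin T) :
    (B + (Pi.single n (Pi.single x 1) : ι → Fin T → ℕ)) m y =
      B m y + if m = n ∧ y = x then 1 else 0 := by
  rw [Pi.add_apply, Pi.add_apply, single_single_apply]

omit [Fintype ι] [DecidableEq ι] in
theorem tailSum_add_single_le {c h : Fin T → ℕ} {j j' : Fin T}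
    (htail : ∀ k, tailSum (c + Pi.single j 1) k ≤ tailSum h k)
    (hstrict : ∀ k : ℕ, (j : ℕ) < k → k ≤ j' → tailSum (c + Pi.single j 1) k < tailSum h k)
    (k : ℕ) : tailSum (c + Pi.single j' 1) k ≤ tailSum h k := by
  have hk := htail k
  have hk' := hstrict k
  simp only [tailSum_add, tailSum_single] at hk hk' ⊢
  split_ifs at hk hk' ⊢ <;> omega

omit [Fintype ι] [DecidableEq ι] in
theorem excess_add_single_lt {c h : Fin T → ℕ} {j j' : Fin T}
    (hj : h j < (c + Pi.single j 1 : Fin T → ℕ) j)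
    (hj' : (c + Pi.single j 1 : Fin T → ℕ) j' < h j') :
    excess (c + Pi.single j' 1) h < excess (c + Pi.single j 1) h := by
  have hjj' : j' ≠ j := by
    rintro rfl
    simp only [Pi.add_apply, Pi.single_eq_same] at hj hj'
    omega
  simp only [Pi.add_apply, Pi.single_eq_same, Pi.single_eq_of_ne hjj'] at hj hj'
  refine sum_lt_sum (fun x _ => ?_) ⟨j, mem_univ j, ?_⟩
  · rcases eq_or_ne x j' with rfl | hxj'
    · simp only [Pi.add_apply, Pi.single_eq_same]
      omega
    · simp only [Pi.add_apply, Pi.single_eq_of_ne hxj', add_zero]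
      omega
  · simp only [Pi.add_apply, Pi.single_eq_same, Pi.single_eq_of_ne hjj'.symm]
    omega

omit [Fintype ι] in
theorem add_single_single_le {rbar : ι → ℕ} {B : ι → Fin T → ℕ} {n : ι} {j j' : Fin T}
    (hcap : ∀ m y, (B + (Pi.single n (Pi.single j 1) : ι → Fin T → ℕ)) m y ≤ rbar m)
    (hn : B n j' ≤ B n j) (m : ι) (y : Fin T) :
    (B + (Pi.single n (Pi.single j' 1) : ι → Fin T → ℕ)) m y ≤ rbar m := by
  by_cases hmy : m = n ∧ y = j'
  · obtain ⟨rfl, rfl⟩ := hmy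
    have hnj : B m j + 1 ≤ rbar m := by simpa [add_single_single_apply] using hcap m j
    rw [add_single_single_apply, if_pos ⟨rfl, rfl⟩]
    omega
  · rw [add_single_single_apply, if_neg hmy, add_zero]
    exact le_trans (by rw [add_single_single_apply]; exact Nat.le_add_right _ _) (hcap m y)

theorem exists_excess_lt_of_overloaded {rbar : ι → ℕ} {h : Fin T → ℕ} {A : ι → Fin T → ℕ}
    (hanti : Antitone h) (hcap : ∀ n j, A n j ≤ rbar n)
    (htail : ∀ k, tailSum (∑ n, A n) k ≤ tailSum h k) (hover : ∃ j, h j < (∑ n, A n) j) :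
    ∃ A' : ι → Fin T → ℕ, (∀ n j, A' n j ≤ rbar n) ∧ (∀ n, ∑ j, A' n j = ∑ j, A n j) ∧
      (∀ k, tailSum (∑ n, A' n) k ≤ tailSum h k) ∧
      excess (∑ n, A' n) h < excess (∑ n, A n) h := by
  obtain ⟨j, j', hjj', hj, hj', hstrict⟩ := exists_overloaded_slack htail hover
  obtain ⟨n, -, hn⟩ : ∃ n ∈ univ, A n j' < A n j := by
    refine exists_lt_of_sum_lt ?_
    simpa only [← Finset.sum_apply] using (hj'.trans_le (hanti hjj'.le)).trans hj
  obtain ⟨B, rfl⟩ : ∃ B, A = B + (Pi.single n (Pi.single j 1) : ι → Fin T → ℕ) := by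
    refine ⟨A - Pi.single n (Pi.single j 1), funext fun m => funext fun y => ?_⟩
    rw [add_single_single_apply, Pi.sub_apply, Pi.sub_apply, single_single_apply]
    split_ifs with hmy
    · obtain ⟨rfl, rfl⟩ := hmy
      omega
    · rfl
  simp only [add_single_single_apply, hjj'.ne', true_and, and_self, if_false, if_true,
    add_zero] at hn
  simp only [sum_add_single_single] at hj hj' hstrict htail ⊢
  refine ⟨B + (Pi.single n (Pi.single j' 1) : ι → Fin T → ℕ),
    add_single_single_le hcap (by omega), fun m => ?_, fun k => ?_, ?_⟩
  · rw [sum_add_single_single_apply, sum_add_single_single_apply]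
  · rw [sum_add_single_single]
    exact tailSum_add_single_le htail hstrict k
  · rw [sum_add_single_single]
    exact excess_add_single_lt hj hj'

theorem exists_sum_le_of_tailSum_le {rbar : ι → ℕ} {h : Fin T → ℕ} {A : ι → Fin T → ℕ}
    (hanti : Antitone h) (hcap : ∀ n j, A n j ≤ rbar n)
    (htail : ∀ k, tailSum (∑ n, A n) k ≤ tailSum h k) :
    ∃ A' : ι → Fin T → ℕ, (∀ n j, A' n j ≤ rbar n) ∧ (∀ n, ∑ j, A' n j = ∑ j, A n j) ∧
      ∑ n, A' n ≤ h := by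
  obtain ⟨A', ⟨hcap', hrow', htail'⟩, hmin⟩ := exists_minimalFor_of_wellFoundedLT
    (fun A' : ι → Fin T → ℕ => (∀ n j, A' n j ≤ rbar n) ∧ (∀ n, ∑ j, A' n j = ∑ j, A n j) ∧
      ∀ k, tailSum (∑ n, A' n) k ≤ tailSum h k)
    (fun A' => excess (∑ n, A' n) h) ⟨A, hcap, fun _ => rfl, htail⟩
  refine ⟨A', hcap', hrow', fun j => not_lt.1 fun hj => ?_⟩
  obtain ⟨A'', hcap'', hrow'', htail'', hlt⟩ :=
    exists_excess_lt_of_overloaded hanti hcap' htail' ⟨j, hj⟩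
  exact hlt.not_ge (hmin ⟨hcap'', fun n => (hrow'' n).trans (hrow' n), htail''⟩ hlt.le)

end Exchange

theorem rate_constrained_adequacy_general (N T : ℕ) (h : Fin T → ℕ) (hanti : Antitone h)
    (r rbar : Fin N → ℕ) :
    (∃ A : Fin N → Fin T → ℕ,
        (∀ n j, A n j ≤ rbar n) ∧
        (∀ n, ∑ j, A n j = r n) ∧
        (∀ j, ∑ n, A n j ≤ h j)) ↔
      (∀ k ≤ T, ∑ n, (r n - rbar n * k) ≤
        ∑ j ∈ Finset.univ.filter (fun j : Fin T => k ≤ (j : ℕ)), h j) := by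
  constructor
  · rintro ⟨A, hcap, hrow, hcol⟩ k -
    calc ∑ n, (r n - rbar n * k)
        ≤ ∑ n, tailSum (A n) k := sum_le_sum fun n _ => hrow n ▸ sum_sub_mul_le_tailSum (hcap n) k
      _ = tailSum (∑ n, A n) k := (tailSum_sum _ _ _).symm
      _ ≤ tailSum h k := tailSum_mono (fun j => by simpa only [Finset.sum_apply] using hcol j) k
  · intro hcond
    have hR : ∀ n, r n ≤ rbar n * T := by
      have hT : ∑ n, (r n - rbar n * T) ≤ tailSum h T := hcond T le_rfl
      rw [tailSum_of_le h le_rfl, Nat.le_zero, sum_eq_zero_iff] at hT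
      exact fun n => Nat.sub_eq_zero_iff_le.1 (hT n (mem_univ n))
    obtain ⟨A, hcap, hrow, hcol⟩ := exists_sum_le_of_tailSum_le hanti
      (A := fun n => frontLoaded (rbar n) (r n)) (fun n j => min_le_left _ _) fun k => by
        rcases le_or_gt k T with hk | hk
        · rw [tailSum_sum, sum_congr rfl fun n _ => tailSum_frontLoaded (hR n) k]
          exact hcond k hk
        · rw [tailSum_of_le _ hk.le]
          exact Nat.zero_le _
    refine ⟨A, hcap, fun n => ?_, fun j => by simpa only [Finset.sum_apply] using hcol j⟩
    rw [hrow n, ← tailSum_zero, tailSum_frontLoaded (hR n), mul_zero, Nat.sub_zero]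

/-- Rate-constrained adequacy with a uniform service time: a nonnegative integer matrix
with entries `A n j ≤ rbar n`, row sums `r n`, and column sums at most `h j` exists iff
for every `k ≤ T` the sum of the `T - k` smallest entries of `h` (here the tail entries,
since `h` is non-increasing) is at least `∑ n, [r n - rbar n * k]⁺`. -/
theorem rate_constrained_adequacy (N T : ℕ) (h : Fin T → ℕ) (hanti : Antitone h)
    (r rbar : Fin N → ℕ) (hrbar : ∀ n, 1 ≤ rbar n) :
    (∃ A : Fin N → Fin T → ℕ,
        (∀ n j, A n j ≤ rbar n) ∧
        (∀ n, ∑ j, A n j = r n) ∧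
        (∀ j, ∑ n, A n j ≤ h j)) ↔
      (∀ k ≤ T, ∑ n, (r n - rbar n * k) ≤
        ∑ j ∈ Finset.univ.filter (fun j : Fin T => k ≤ (j : ℕ)), h j) :=
  rate_constrained_adequacy_general N T h hanti r rbar
end
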